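/- Let E and E' be finite-dimensional complex inner product spaces, A : E → E' complex-linear with adjoint A^*, λ > 0, α > 0, 0 < m < 1, and μ ≥ 0 with Re⟪A^*(A x), x⟫ ≥ μ‖x‖² for all x ∈ E. Let F : E → E be m-monotone and Lipschitz with constant (2 − m). Then the map T(x) = (id + αλ·A^*A)⁻¹(x − α·F(x)) is Lipschitz with constant L = √(1 − 2αm + α²(2 − m)²) / (1 + αλμ): for all x, y ∈ E, ‖T(x) − T(y)‖ ≤ L‖x − y‖. -/

import Mathlib

/-!
`B = id + αλ A^*A` satisfies `Re⟪B z, z⟫ = ‖z‖² + αλ Re⟪A^*A z, z⟫ ≥ (1 + αλμ)‖z‖²`, so by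
Cauchy–Schwarz `‖B z‖ ≥ (1 + αλμ)‖z‖`; hence `B` is bijective and `B⁻¹` is `1/(1 + αλμ)`-Lipschitz.
The forward step `x ↦ x − αF x` is `√(1 − 2αm + α²(2 − m)²)`-Lipschitz: expanding `‖u − αw‖²` with
`u = x − y`, `w = F x − F y`, monotonicity bounds the cross term and the Lipschitz bound `‖w‖²`.
-/

open scoped InnerProductSpace

section

variable {𝕜 E : Type*} [RCLike 𝕜] [NormedAddCommGroup E] [InnerProductSpace 𝕜 E]

theorem mul_norm_le_norm_of_mul_sq_le_re_inner {c : ℝ} {u v : E}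
    (h : c * ‖u‖ ^ 2 ≤ RCLike.re ⟪v, u⟫_𝕜) : c * ‖u‖ ≤ ‖v‖ := by
  rcases eq_or_ne u 0 with rfl | hu
  · simp
  have hu_pos : 0 < ‖u‖ := norm_pos_iff.mpr hu
  have hcs : RCLike.re ⟪v, u⟫_𝕜 ≤ ‖v‖ * ‖u‖ := re_inner_le_norm v u
  nlinarith

theorem mul_sq_le_re_inner_id_add_smul {T : E →ₗ[𝕜] E} {μ c : ℝ} (hc : 0 ≤ c)
    (hT : ∀ z, μ * ‖z‖ ^ 2 ≤ RCLike.re ⟪T z, z⟫_𝕜) (z : E) :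
    (1 + c * μ) * ‖z‖ ^ 2 ≤ RCLike.re ⟪(LinearMap.id + (c : 𝕜) • T : E →ₗ[𝕜] E) z, z⟫_𝕜 := by
  have hexpand : RCLike.re ⟪(LinearMap.id + (c : 𝕜) • T : E →ₗ[𝕜] E) z, z⟫_𝕜
      = ‖z‖ ^ 2 + c * RCLike.re ⟪T z, z⟫_𝕜 := by
    simp only [LinearMap.add_apply, LinearMap.id_apply, LinearMap.smul_apply, inner_add_left,
      inner_smul_left, RCLike.conj_ofReal, map_add, RCLike.re_ofReal_mul, inner_self_eq_norm_sq]
  nlinarith [hT z, mul_le_mul_of_nonneg_left (hT z) hc]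

section Coercive

variable {B : E →ₗ[𝕜] E} {c : ℝ}

theorem LinearMap.injective_of_mul_sq_le_re_inner (hc : 0 < c)
    (hB : ∀ z, c * ‖z‖ ^ 2 ≤ RCLike.re ⟪B z, z⟫_𝕜) : Function.Injective B := by
  refine (injective_iff_map_eq_zero B).mpr fun z hz => ?_
  have h := mul_norm_le_norm_of_mul_sq_le_re_inner (hB z)
  rw [hz, norm_zero] at h
  exact norm_le_zero_iff.mp (nonpos_of_mul_nonpos_right h hc)

theorem LinearMap.mul_norm_invFun_sub_le [FiniteDimensional 𝕜 E] (hc : 0 < c)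
    (hB : ∀ z, c * ‖z‖ ^ 2 ≤ RCLike.re ⟪B z, z⟫_𝕜) (u v : E) :
    c * ‖Function.invFun B u - Function.invFun B v‖ ≤ ‖u - v‖ := by
  have hsurj : Function.Surjective B :=
    LinearMap.injective_iff_surjective.mp (B.injective_of_mul_sq_le_re_inner hc hB)
  have h := mul_norm_le_norm_of_mul_sq_le_re_inner (hB (Function.invFun B u - Function.invFun B v))
  rwa [map_sub, Function.rightInverse_invFun hsurj u, Function.rightInverse_invFun hsurj v] at h

end Coercive

theorem norm_sub_smul_sq_le {u w : E} {m L α : ℝ} (hα : 0 ≤ α)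
    (hmono : m * ‖u‖ ^ 2 ≤ RCLike.re ⟪w, u⟫_𝕜) (hlip : ‖w‖ ≤ L * ‖u‖) :
    ‖u - (α : 𝕜) • w‖ ^ 2 ≤ (1 - 2 * α * m + α ^ 2 * L ^ 2) * ‖u‖ ^ 2 := by
  have hexpand :
      ‖u - (α : 𝕜) • w‖ ^ 2 = ‖u‖ ^ 2 - 2 * α * RCLike.re ⟪w, u⟫_𝕜 + α ^ 2 * ‖w‖ ^ 2 := by
    rw [norm_sub_sq (𝕜 := 𝕜), inner_smul_right, RCLike.re_ofReal_mul, ← inner_re_symm, norm_smul,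
      RCLike.norm_ofReal, mul_pow, sq_abs]
    ring
  have hw_sq : ‖w‖ ^ 2 ≤ L ^ 2 * ‖u‖ ^ 2 := by
    rw [← mul_pow]
    exact pow_le_pow_left₀ (norm_nonneg w) hlip 2
  rw [hexpand]
  nlinarith [mul_le_mul_of_nonneg_left hmono hα, mul_le_mul_of_nonneg_left hw_sq (sq_nonneg α)]

theorem norm_id_sub_smul_sub_le {F : E → E} {m L α : ℝ} (hα : 0 ≤ α)
    (hmono : ∀ x y, m * ‖x - y‖ ^ 2 ≤ RCLike.re ⟪F x - F y, x - y⟫_𝕜)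
    (hlip : ∀ x y, ‖F x - F y‖ ≤ L * ‖x - y‖) (x y : E) :
    ‖(x - (α : 𝕜) • F x) - (y - (α : 𝕜) • F y)‖
      ≤ Real.sqrt (1 - 2 * α * m + α ^ 2 * L ^ 2) * ‖x - y‖ := by
  have h := Real.sqrt_le_sqrt (norm_sub_smul_sq_le (𝕜 := 𝕜) hα (hmono x y) (hlip x y))
  rw [Real.sqrt_sq (norm_nonneg _), Real.sqrt_mul' _ (sq_nonneg _),
    Real.sqrt_sq (norm_nonneg _)] at h
  rwa [sub_sub_sub_comm, ← smul_sub]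

end

theorem mol_map_lipschitz_general
    {E E' : Type*} [NormedAddCommGroup E] [InnerProductSpace ℂ E] [FiniteDimensional ℂ E]
    [NormedAddCommGroup E'] [InnerProductSpace ℂ E'] [FiniteDimensional ℂ E']
    (A : E →ₗ[ℂ] E') (lam α m μ : ℝ)
    (hlam : 0 < lam) (hα : 0 < α) (hμ : 0 ≤ μ)
    (hcoer : ∀ x : E, μ * ‖x‖ ^ 2 ≤ (⟪(LinearMap.adjoint A) (A x), x⟫_ℂ).re)
    (F : E → E)
    (hFmono : ∀ x y : E, m * ‖x - y‖ ^ 2 ≤ (⟪F x - F y, x - y⟫_ℂ).re)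
    (hFlip : ∀ x y : E, ‖F x - F y‖ ≤ (2 - m) * ‖x - y‖)
    (T : E → E)
    (hT : T = fun x : E =>
      Function.invFun
        ⇑((LinearMap.id : E →ₗ[ℂ] E) +
            ((α * lam : ℝ) : ℂ) • ((LinearMap.adjoint A).comp A))
        (x - (α : ℂ) • F x)) :
    ∀ x y : E,
      ‖T x - T y‖ ≤
        (Real.sqrt (1 - 2 * α * m + α ^ 2 * (2 - m) ^ 2) / (1 + α * lam * μ)) *
          ‖x - y‖ := by
  intro x y
  have hc : 0 ≤ α * lam := (mul_pos hα hlam).le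
  have hpos : 0 < 1 + α * lam * μ := by positivity
  have hB := mul_sq_le_re_inner_id_add_smul (T := (LinearMap.adjoint A).comp A) hc hcoer
  have hinv := LinearMap.mul_norm_invFun_sub_le hpos hB (x - (α : ℂ) • F x) (y - (α : ℂ) • F y)
  have hstep := norm_id_sub_smul_sub_le (𝕜 := ℂ) hα.le hFmono hFlip x y
  rw [div_mul_eq_mul_div, le_div_iff₀ hpos, mul_comm, hT]
  exact hinv.trans hstep

/-- Contraction claim inside the paper's Proposition IV.2: the MOL map
`T(x) = (id + αλ A^*A)⁻¹ (x − α F x)` is Lipschitz with constant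
`√(1 − 2αm + α²(2 − m)²)/(1 + αλμ)`. -/
theorem mol_map_lipschitz
    {E E' : Type*} [NormedAddCommGroup E] [InnerProductSpace ℂ E] [FiniteDimensional ℂ E]
    [NormedAddCommGroup E'] [InnerProductSpace ℂ E'] [FiniteDimensional ℂ E']
    (A : E →ₗ[ℂ] E') (lam α m μ : ℝ)
    (hlam : 0 < lam) (hα : 0 < α) (hm0 : 0 < m) (hm1 : m < 1) (hμ : 0 ≤ μ)
    (hcoer : ∀ x : E, μ * ‖x‖ ^ 2 ≤ (⟪(LinearMap.adjoint A) (A x), x⟫_ℂ).re)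
    (F : E → E)
    (hFmono : ∀ x y : E, m * ‖x - y‖ ^ 2 ≤ (⟪F x - F y, x - y⟫_ℂ).re)
    (hFlip : ∀ x y : E, ‖F x - F y‖ ≤ (2 - m) * ‖x - y‖)
    (T : E → E)
    (hT : T = fun x : E =>
      Function.invFun
        ⇑((LinearMap.id : E →ₗ[ℂ] E) +
            ((α * lam : ℝ) : ℂ) • ((LinearMap.adjoint A).comp A))
        (x - (α : ℂ) • F x)) :
    ∀ x y : E,
      ‖T x - T y‖ ≤
        (Real.sqrt (1 - 2 * α * m + α ^ 2 * (2 - m) ^ 2) / (1 + α * lam * μ)) *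
          ‖x - y‖ :=
  mol_map_lipschitz_general A lam α m μ hlam hα hμ hcoer F hFmono hFlip T hT
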